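/- Let ε₀, μ₀ > 0 and c = 1/√(ε₀μ₀). Let ε_r : ℝ³ → ℝ be twice continuously differentiable, σ : ℝ³ → ℝ continuous, and E : ℝ³ × ℝ → ℝ³ twice continuously differentiable. Assume the gauge condition ∇·(ε_r(x) E(x,t)) = 0 holds for all (x,t) (spatial divergence). Then E satisfies the stabilized equation (1/c²) ε_r ∂ₜ²E + ∇(∇·E) − ΔE − ε₀ ∇(∇·(ε_r E)) = −μ₀ σ ∂ₜE pointwise if and only if E satisfies Maxwell's equation (1/c²) ε_r ∂ₜ²E + ∇×(∇×E) = −μ₀ σ ∂ₜE pointwise. -/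

import Mathlib

open MeasureTheory

/-- Partial derivative of a scalar function on ℝ³ in the i-th coordinate direction. -/
noncomputable def pd (i : Fin 3) (f : (Fin 3 → ℝ) → ℝ) (x : Fin 3 → ℝ) : ℝ :=
  fderiv ℝ f x (Pi.single i 1)

/-- Divergence ∇·F of a vector field on ℝ³. -/
noncomputable def vdiv (F : (Fin 3 → ℝ) → (Fin 3 → ℝ)) (x : Fin 3 → ℝ) : ℝ :=
  ∑ i, pd i (fun y => F y i) x

/-- Gradient of a scalar function on ℝ³. -/
noncomputable def grad (f : (Fin 3 → ℝ) → ℝ) (x : Fin 3 → ℝ) : Fin 3 → ℝ :=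
  fun i => pd i f x

/-- Laplacian of a scalar function on ℝ³. -/
noncomputable def lap (f : (Fin 3 → ℝ) → ℝ) (x : Fin 3 → ℝ) : ℝ :=
  ∑ i, pd i (pd i f) x

/-- Componentwise Laplacian of a vector field on ℝ³. -/
noncomputable def vlap (F : (Fin 3 → ℝ) → (Fin 3 → ℝ)) (x : Fin 3 → ℝ) : Fin 3 → ℝ :=
  fun i => lap (fun y => F y i) x

/-- Curl ∇×F of a vector field on ℝ³. -/
noncomputable def curl (F : (Fin 3 → ℝ) → (Fin 3 → ℝ)) (x : Fin 3 → ℝ) : Fin 3 → ℝ :=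
  ![pd 1 (fun y => F y 2) x - pd 2 (fun y => F y 1) x,
    pd 2 (fun y => F y 0) x - pd 0 (fun y => F y 2) x,
    pd 0 (fun y => F y 1) x - pd 1 (fun y => F y 0) x]

/-- Euclidean dot product on ℝ³. -/
noncomputable def dot (u v : Fin 3 → ℝ) : ℝ := ∑ i, u i * v i

/-- Frobenius inner product ∇F : ∇G of the Jacobians of two vector fields on ℝ³. -/
noncomputable def frob (F G : (Fin 3 → ℝ) → (Fin 3 → ℝ)) (x : Fin 3 → ℝ) : ℝ :=
  ∑ i, ∑ j, pd j (fun y => F y i) x * pd j (fun y => G y i) x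

/-- First time derivative ∂ₜF of a time-dependent vector field on ℝ³ × ℝ. -/
noncomputable def dtv (F : (Fin 3 → ℝ) × ℝ → (Fin 3 → ℝ)) (x : Fin 3 → ℝ) (t : ℝ) :
    Fin 3 → ℝ :=
  fun i => deriv (fun s => F (x, s) i) t

/-- Second time derivative ∂ₜ²F of a time-dependent vector field on ℝ³ × ℝ. -/
noncomputable def dtv2 (F : (Fin 3 → ℝ) × ℝ → (Fin 3 → ℝ)) (x : Fin 3 → ℝ) (t : ℝ) :
    Fin 3 → ℝ :=
  fun i => deriv (fun s => deriv (fun s' => F (x, s') i) s) t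

/-! Under the gauge condition the term `ε₀ ∇(∇·(ε_r E))` is the gradient of the zero function, and
for a `C²` field `∇×(∇×E) = ∇(∇·E) − ΔE` because mixed second partial derivatives commute
(Schwarz); so the two equations have the same left-hand side. -/

section PartialDerivatives

variable {f g : (Fin 3 → ℝ) → ℝ} {x : Fin 3 → ℝ}

lemma differentiableAt_pd (hf : ContDiffAt ℝ 2 f x) (j : Fin 3) :
    DifferentiableAt ℝ (pd j f) x :=
  ((hf.fderiv_right (m := 1) (by norm_num)).differentiableAt (by norm_num)).clm_apply
    (differentiableAt_const _)

lemma pd_comm (hf : ContDiffAt ℝ 2 f x) (i j : Fin 3) :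
    pd i (pd j f) x = pd j (pd i f) x := by
  have hf' : DifferentiableAt ℝ (fderiv ℝ f) x :=
    (hf.fderiv_right (m := 1) (by norm_num)).differentiableAt (by norm_num)
  have hsecond : ∀ u v : Fin 3 → ℝ,
      fderiv ℝ (fun y => fderiv ℝ f y u) x v = fderiv ℝ (fderiv ℝ f) x v u := fun u v => by
    rw [fderiv_clm_apply hf' (differentiableAt_const u)]
    simp
  exact (hsecond _ _).trans ((hf.isSymmSndFDerivAt (by simp) _ _).trans (hsecond _ _).symm)

lemma pd_fun_sub (hf : DifferentiableAt ℝ f x) (hg : DifferentiableAt ℝ g x) (i : Fin 3) :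
    pd i (fun y => f y - g y) x = pd i f x - pd i g x := by
  simp [pd, fderiv_fun_sub hf hg]

lemma pd_fun_sum {ι : Type*} (s : Finset ι) {F : ι → (Fin 3 → ℝ) → ℝ}
    (hF : ∀ k ∈ s, DifferentiableAt ℝ (F k) x) (i : Fin 3) :
    pd i (fun y => ∑ k ∈ s, F k y) x = ∑ k ∈ s, pd i (F k) x := by
  simp [pd, fderiv_fun_sum hF]

lemma grad_zero : grad 0 = 0 := by
  ext x i
  simp [grad, pd]

end PartialDerivatives

section VectorCalculus

variable {F : (Fin 3 → ℝ) → (Fin 3 → ℝ)} {x : Fin 3 → ℝ}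

lemma grad_vdiv_apply (hF : ContDiffAt ℝ 2 F x) (i : Fin 3) :
    grad (vdiv F) x i = ∑ j, pd j (pd i (fun y => F y j)) x := by
  have hFj : ∀ j, ContDiffAt ℝ 2 (fun y => F y j) x := fun j => contDiffAt_pi.1 hF j
  unfold grad vdiv
  rw [pd_fun_sum _ (fun j _ => differentiableAt_pd (hFj j) j)]
  exact Finset.sum_congr rfl fun j _ => pd_comm (hFj j) i j

lemma curl_curl_eq (hF : ContDiffAt ℝ 2 F x) :
    curl (curl F) x = grad (vdiv F) x - vlap F x := by
  have hd : ∀ j k, DifferentiableAt ℝ (pd j (fun y => F y k)) x :=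
    fun j k => differentiableAt_pd (contDiffAt_pi.1 hF k) j
  ext i
  rw [Pi.sub_apply, grad_vdiv_apply hF]
  fin_cases i <;>
    simp only [curl, vlap, lap, Fin.sum_univ_three, Fin.isValue, Fin.zero_eta, Fin.mk_one,
      Fin.reduceFinMk, Matrix.cons_val_zero, Matrix.cons_val_one, Matrix.cons_val_two,
      Matrix.head_cons, Matrix.tail_cons, pd_fun_sub (hd _ _) (hd _ _)] <;>
    ring

end VectorCalculus

theorem stabilized_iff_maxwell_general (ε₀ μ₀ : ℝ) (c : ℝ)
    (εr : (Fin 3 → ℝ) → ℝ) (σ : (Fin 3 → ℝ) → ℝ)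
    (E : (Fin 3 → ℝ) × ℝ → (Fin 3 → ℝ)) (hE : ContDiff ℝ 2 E)
    (hgauge : ∀ (x : Fin 3 → ℝ) (t : ℝ), vdiv (fun y => εr y • E (y, t)) x = 0) :
    (∀ (x : Fin 3 → ℝ) (t : ℝ),
        (εr x / c ^ 2) • dtv2 E x t
          + grad (vdiv (fun y => E (y, t))) x
          - vlap (fun y => E (y, t)) x
          - ε₀ • grad (vdiv (fun y => εr y • E (y, t))) x
        = -((μ₀ * σ x) • dtv E x t))
    ↔ (∀ (x : Fin 3 → ℝ) (t : ℝ),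
        (εr x / c ^ 2) • dtv2 E x t + curl (curl (fun y => E (y, t))) x
        = -((μ₀ * σ x) • dtv E x t)) := by
  refine forall₂_congr fun x t => ?_
  have hgauge_t : vdiv (fun y => εr y • E (y, t)) = 0 := funext fun y => hgauge y t
  have hEt : ContDiffAt ℝ 2 (fun y => E (y, t)) x :=
    (hE.comp (contDiff_id.prodMk contDiff_const)).contDiffAt
  rw [hgauge_t, grad_zero, Pi.zero_apply, smul_zero, sub_zero, curl_curl_eq hEt, add_sub_assoc]

/-- Under the gauge condition ∇·(ε_r E) = 0, the stabilized equation
(1/c²)ε_r∂ₜ²E + ∇(∇·E) − ΔE − ε₀∇(∇·(ε_r E)) = −μ₀σ∂ₜE is equivalent to Maxwell's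
equation (1/c²)ε_r∂ₜ²E + ∇×(∇×E) = −μ₀σ∂ₜE. -/
theorem stabilized_iff_maxwell (ε₀ μ₀ : ℝ) (hε₀ : 0 < ε₀) (hμ₀ : 0 < μ₀)
    (c : ℝ) (hc : c = 1 / Real.sqrt (ε₀ * μ₀))
    (εr : (Fin 3 → ℝ) → ℝ) (hεr : ContDiff ℝ 2 εr)
    (σ : (Fin 3 → ℝ) → ℝ) (hσ : Continuous σ)
    (E : (Fin 3 → ℝ) × ℝ → (Fin 3 → ℝ)) (hE : ContDiff ℝ 2 E)
    (hgauge : ∀ (x : Fin 3 → ℝ) (t : ℝ), vdiv (fun y => εr y • E (y, t)) x = 0) :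
    (∀ (x : Fin 3 → ℝ) (t : ℝ),
        (εr x / c ^ 2) • dtv2 E x t
          + grad (vdiv (fun y => E (y, t))) x
          - vlap (fun y => E (y, t)) x
          - ε₀ • grad (vdiv (fun y => εr y • E (y, t))) x
        = -((μ₀ * σ x) • dtv E x t))
    ↔ (∀ (x : Fin 3 → ℝ) (t : ℝ),
        (εr x / c ^ 2) • dtv2 E x t + curl (curl (fun y => E (y, t))) x
        = -((μ₀ * σ x) • dtv E x t)) :=
  stabilized_iff_maxwell_general ε₀ μ₀ c εr σ E hE hgauge
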